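/- arXiv:2406.12097 — 2 statements merged into one kernel-verified Lean document; each statement's English description precedes it below -/
import Mathlib

section
/- For every κ ≥ 4 there exists k₀ = k₀(κ) > 0 such that the following holds. Fix N ≥ 2, an N-ary tree V of depth L ≥ 1, and radially decaying weights with parameter ε ≤ k₀/N; fix points y_C ∈ C for each C ∈ 𝒞 and let B_C = B(y_C, κ·K₁·W_C), where K₁ > 1 is an absolute constant (independent of κ) chosen so that C ⊂ κ^{−1}B_C for every C ∈ 𝒞. Then κ·B_C ⊂ B_{π(C)} for every C ∈ 𝒞₀. -/
open MeasureTheory Set Metric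
open scoped Classical

noncomputable section

abbrev Pt : Type := EuclideanSpace ℝ (Fin 2)

/-- The point `(a, b)` of the Euclidean plane. -/
def pt (a b : ℝ) : Pt := WithLp.toLp 2 ![a, b]

/-- `V` is an `N`-ary tree: a finite prefix-closed set of strings over the alphabet
`{0, …, N−1}` containing the empty string (the root), in which every non-leaf node
has at least `2` (and, automatically, at most `N`) children. -/
def IsNaryTree (N : ℕ) (V : Finset (List ℕ)) : Prop :=
  [] ∈ V ∧
  (∀ v ∈ V, ∀ u : List ℕ, u <+: v → u ∈ V) ∧
  (∀ v ∈ V, ∀ i ∈ v, i < N) ∧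
  (∀ v ∈ V, (∃ a : ℕ, v ++ [a] ∈ V) →
    2 ≤ ((Finset.range N).filter (fun a => v ++ [a] ∈ V)).card)

/-- `v` is a leaf of `V`. -/
def IsLeaf (V : Finset (List ℕ)) (v : List ℕ) : Prop :=
  v ∈ V ∧ ∀ a : ℕ, v ++ [a] ∉ V

/-- The tree has depth at least one, i.e. the root is not a leaf. -/
def DepthAtLeastOne (V : Finset (List ℕ)) : Prop := ∃ a : ℕ, [a] ∈ V

/-- Radially decaying weights with parameter `ε` (with the convention `W ∅ = 1`). -/
def RadiallyDecaying (V : Finset (List ℕ)) (W : List ℕ → ℝ) (ε : ℝ) : Prop :=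
  W [] = 1 ∧ (∀ v ∈ V, 0 < W v) ∧ ∀ v ∈ V, v ≠ [] → W v ≤ ε * W v.dropLast

/-- The map `Ψ(v) = ∑_{i=1}^{d(v)} W(π_{i−1}(v))·v_i/(N−1)`. -/
def Psi (N : ℕ) (W : List ℕ → ℝ) (v : List ℕ) : ℝ :=
  ∑ i ∈ Finset.range v.length, W (v.take i) * (v.getD i 0 : ℝ) / ((N : ℝ) - 1)

/-- `Δ = min_{v ∈ ∂V} W_v`. -/
def Delta (V : Finset (List ℕ)) (W : List ℕ → ℝ) : ℝ :=
  sInf {w : ℝ | ∃ v, IsLeaf V v ∧ w = W v}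

def E1set (Δ : ℝ) : Set Pt :=
  {x | (∃ n : ℤ, x 0 = (n : ℝ) * Δ) ∧ x 0 ∈ Ico (0 : ℝ) 2 ∧ x 1 = 0}

def E2set (N : ℕ) (V : Finset (List ℕ)) (W : List ℕ → ℝ) : Set Pt :=
  {x | ∃ v, IsLeaf V v ∧ x = pt (Psi N W v) (W v)}

def Eset (N : ℕ) (V : Finset (List ℕ)) (W : List ℕ → ℝ) : Set Pt :=
  E1set (Delta V W) ∪ E2set N V W

/-- Bundle of standing hypotheses: `N ≥ 2`, `V` an `N`-ary tree, `0 < ε ≤ k₀/N`,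
and radially decaying weights with parameter `ε`. -/
def TreeHyp (k₀ : ℝ) (N : ℕ) (V : Finset (List ℕ)) (W : List ℕ → ℝ) (ε : ℝ) : Prop :=
  2 ≤ N ∧ IsNaryTree N V ∧ 0 < ε ∧ ε ≤ k₀ / N ∧ RadiallyDecaying V W ε

/-- Distance between two subsets of the plane. -/
def setDist (s t : Set Pt) : ℝ := sInf {d : ℝ | ∃ x ∈ s, ∃ y ∈ t, d = dist x y}

/-- A dyadic square arising from `Q⁰ = [−3,5)²` by `k` repeated bisections. -/
structure DSquare where
  k : ℕ
  i : ℕ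
  j : ℕ
  hi : i < 2 ^ k
  hj : j < 2 ^ k

namespace DSquare

def side (Q : DSquare) : ℝ := 8 / 2 ^ Q.k

def x0 (Q : DSquare) : ℝ := -3 + Q.i * Q.side

def y0 (Q : DSquare) : ℝ := -3 + Q.j * Q.side

/-- The (half-open) square itself, as a subset of the plane. -/
def set (Q : DSquare) : Set Pt :=
  {x | x 0 ∈ Ico Q.x0 (Q.x0 + Q.side) ∧ x 1 ∈ Ico Q.y0 (Q.y0 + Q.side)}

/-- The concentric dilate `λQ`. -/
def dil (Q : DSquare) (lam : ℝ) : Set Pt :=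
  {x | |x 0 - (Q.x0 + Q.side / 2)| ≤ lam * Q.side / 2 ∧
       |x 1 - (Q.y0 + Q.side / 2)| ≤ lam * Q.side / 2}

/-- The dyadic ancestor of `Q` at generation `k' ≤ Q.k`. -/
def anc (Q : DSquare) (k' : ℕ) (h : k' ≤ Q.k) : DSquare :=
  ⟨k', Q.i / 2 ^ (Q.k - k'), Q.j / 2 ^ (Q.k - k'), by
      have h2 : 0 < 2 ^ (Q.k - k') := pow_pos (by norm_num) _
      rw [Nat.div_lt_iff_lt_mul h2, ← pow_add, Nat.add_sub_cancel' h]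
      exact Q.hi, by
      have h2 : 0 < 2 ^ (Q.k - k') := pow_pos (by norm_num) _
      rw [Nat.div_lt_iff_lt_mul h2, ← pow_add, Nat.add_sub_cancel' h]
      exact Q.hj⟩

end DSquare

def Q0set : Set Pt := {x | x 0 ∈ Ico (-3 : ℝ) 5 ∧ x 1 ∈ Ico (-3 : ℝ) 5}

/-- `Q` belongs to the Whitney decomposition `𝒲` of `Q⁰` relative to `E`:
`3Q ∩ E` has at most one point, while `3Q'' ∩ E` has at least two points for every
proper dyadic ancestor `Q''` of `Q`. -/
def InWhitney (E : Set Pt) (Q : DSquare) : Prop :=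
  (Q.dil 3 ∩ E).Subsingleton ∧
  ∀ k' : ℕ, ∀ h : k' < Q.k, ¬ ((Q.anc k' h.le).dil 3 ∩ E).Subsingleton

/-- `Q ↔ Q'`, i.e. `1.1Q ∩ 1.1Q' ≠ ∅`. -/
def Touch (Q Q' : DSquare) : Prop := (Q.dil 1.1 ∩ Q'.dil 1.1).Nonempty

/-- `‖F‖_{L^{2,p}(Ω)}^p = ∫_Ω |∇²F|^p`. -/
def sobEnergy (p : ℝ) (Ω : Set Pt) (F : Pt → ℝ) : ℝ :=
  ∫ x in Ω, ‖iteratedFDeriv ℝ 2 F x‖ ^ p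

/-- The seminorm `‖F‖_{L^{2,p}(Ω)}`. -/
def sobNorm (p : ℝ) (Ω : Set Pt) (F : Pt → ℝ) : ℝ := sobEnergy p Ω F ^ (1 / p)

/-- Membership in the homogeneous Sobolev space `L^{2,p}(ℝ²)` (we work with `C²`
representatives with finite seminorm). -/
def MemSob (p : ℝ) (F : Pt → ℝ) : Prop :=
  ContDiff ℝ 2 F ∧ Integrable fun x => ‖iteratedFDeriv ℝ 2 F x‖ ^ p

/-- The trace seminorm `‖f‖_{L^{2,p}(E)}` of `f : E → ℝ`. -/
def traceSobNorm (p : ℝ) (E : Set Pt) (f : E → ℝ) : ℝ :=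
  sInf {c : ℝ | ∃ F : Pt → ℝ, MemSob p F ∧ (∀ y : E, F y.1 = f y) ∧ c = sobNorm p univ F}

/-- `T` is a linear extension operator `L^{2,p}(E) → L^{2,p}(ℝ²)` with norm bound `M`. -/
def IsExtOpPlane (p : ℝ) (E : Set Pt) (M : ℝ) (T : (E → ℝ) →ₗ[ℝ] (Pt → ℝ)) : Prop :=
  ∀ f : E → ℝ, (∃ F : Pt → ℝ, MemSob p F ∧ ∀ y : E, F y.1 = f y) →
    MemSob p (T f) ∧ (∀ y : E, T f y.1 = f y) ∧
      sobNorm p univ (T f) ≤ M * traceSobNorm p E f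

/-- `‖Φ‖_{L^{1,p}(V)}^p = ∑_{v ∈ V₀} |Φ(v) − Φ(π(v))|^p W_v^{2−p}`. -/
def treeEnergy (p : ℝ) (V : Finset (List ℕ)) (W : List ℕ → ℝ) (Φ : List ℕ → ℝ) : ℝ :=
  ∑ v ∈ V.erase [], |Φ v - Φ v.dropLast| ^ p * W v ^ (2 - p)

def treeNorm (p : ℝ) (V : Finset (List ℕ)) (W : List ℕ → ℝ) (Φ : List ℕ → ℝ) : ℝ :=
  treeEnergy p V W Φ ^ (1 / p)

/-- The type of leaves of `V`. -/
def Leaves (V : Finset (List ℕ)) : Type := {v : List ℕ // IsLeaf V v}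

/-- The trace seminorm `‖φ‖_{L^{1,p}(∂V)}`. -/
def treeTraceNorm (p : ℝ) (V : Finset (List ℕ)) (W : List ℕ → ℝ) (φ : Leaves V → ℝ) : ℝ :=
  sInf {c : ℝ | ∃ Φ : List ℕ → ℝ, (∀ v : Leaves V, Φ v.1 = φ v) ∧ c = treeNorm p V W Φ}

/-- `H` is a linear extension operator `L^{1,p}(∂V) → L^{1,p}(V)` with norm bound `M`. -/
def IsExtOpTree (p : ℝ) (V : Finset (List ℕ)) (W : List ℕ → ℝ) (M : ℝ)
    (H : (Leaves V → ℝ) →ₗ[ℝ] (List ℕ → ℝ)) : Prop :=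
  ∀ φ : Leaves V → ℝ,
    (∀ v : Leaves V, H φ v.1 = φ v) ∧ treeNorm p V W (H φ) ≤ M * treeTraceNorm p V W φ

/-- Longest common prefix of two strings (the lowest common ancestor). -/
def lcp : List ℕ → List ℕ → List ℕ
  | a :: as, b :: bs => if a = b then a :: lcp as bs else []
  | _, _ => []

/-- The cluster `C_v ⊆ E₂` associated to a vertex `v ∈ V`. -/
def Cluster (N : ℕ) (V : Finset (List ℕ)) (W : List ℕ → ℝ) (v : List ℕ) : Set Pt :=
  {x | ∃ u, IsLeaf V u ∧ v <+: u ∧ x = pt (Psi N W u) (W u)}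

/-- The average `(∂₂G)_S` of the vertical derivative of `G` over `S`. -/
def d2avg (S : Set Pt) (G : Pt → ℝ) : ℝ :=
  ⨍ x in S, fderiv ℝ G x (EuclideanSpace.single 1 1)

end


/-! The cluster `C_v` lies in the rectangle `[Ψ(v), Ψ(v) + 2W_v] × (0, W_v]`: below `v` every
level adds at most its own weight to `Ψ`, and these weights decay geometrically from `W_v`.
Hence `diam C_v ≤ 3W_v`, so `K₁ = 3` works. The dilated ball `κB_C` has radius
`3κ²W_v ≤ 3κ²εW_{π(v)}`, and its centre lies within `3W_{π(v)}` of `y_{π(v)}` because both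
centres lie in `C_{π(v)}`; so `κB_C ⊆ B_{π(C)}` as soon as `κ²ε ≤ κ − 1`, which
`k₀ = 2(κ − 1)/κ²` guarantees. -/

lemma dist_le_abs_sub_add_abs_sub (x y : Pt) : dist x y ≤ |x 0 - y 0| + |x 1 - y 1| := by
  rw [EuclideanSpace.dist_eq, Fin.sum_univ_two, Real.dist_eq, Real.dist_eq,
    Real.sqrt_le_left (by positivity)]
  nlinarith [abs_nonneg (x 0 - y 0), abs_nonneg (x 1 - y 1)]

lemma List.dropLast_take_add_one {α : Type*} {l : List α} {i : ℕ} (h : i < l.length) :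
    (l.take (i + 1)).dropLast = l.take i := by
  rw [List.dropLast_eq_take, List.take_take, List.length_take]
  congr 1
  omega

section Tree

variable {N : ℕ} {V : Finset (List ℕ)} {W : List ℕ → ℝ} {ε : ℝ}

lemma IsNaryTree.mem_of_prefix (hV : IsNaryTree N V) {u v : List ℕ} (hv : v ∈ V)
    (huv : u <+: v) : u ∈ V :=
  hV.2.1 v hv u huv

lemma IsNaryTree.lt_of_mem (hV : IsNaryTree N V) {v : List ℕ} (hv : v ∈ V) {a : ℕ}
    (ha : a ∈ v) : a < N :=
  hV.2.2.1 v hv a ha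

lemma RadiallyDecaying.weight_pos (hW : RadiallyDecaying V W ε) {v : List ℕ} (hv : v ∈ V) :
    0 < W v :=
  hW.2.1 v hv

lemma RadiallyDecaying.weight_le (hW : RadiallyDecaying V W ε) {v : List ℕ} (hv : v ∈ V)
    (hv₀ : v ≠ []) : W v ≤ ε * W v.dropLast :=
  hW.2.2 v hv hv₀

lemma RadiallyDecaying.weight_take_le (hV : IsNaryTree N V) (hW : RadiallyDecaying V W ε)
    (hε : 0 ≤ ε) {u : List ℕ} (hu : u ∈ V) {d i : ℕ} (hdi : d ≤ i) (hi : i ≤ u.length) :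
    W (u.take i) ≤ ε ^ (i - d) * W (u.take d) := by
  induction i, hdi using Nat.le_induction with
  | base => simp
  | succ i hdi ih =>
    have hi' : i < u.length := by omega
    have hne : u.take (i + 1) ≠ [] := List.ne_nil_of_length_pos (by rw [List.length_take]; omega)
    calc W (u.take (i + 1)) ≤ ε * W (u.take i) := by
          simpa [List.dropLast_take_add_one hi'] using
            hW.weight_le (hV.mem_of_prefix hu (List.take_prefix _ _)) hne
      _ ≤ ε * (ε ^ (i - d) * W (u.take d)) := mul_le_mul_of_nonneg_left (ih hi'.le) hε
      _ = ε ^ (i + 1 - d) * W (u.take d) := by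
          rw [Nat.sub_add_comm hdi, pow_succ]; ring

lemma Psi_take (u : List ℕ) {d : ℕ} (hd : d ≤ u.length) :
    Psi N W (u.take d) =
      ∑ i ∈ Finset.range d, W (u.take i) * (u.getD i 0 : ℝ) / ((N : ℝ) - 1) := by
  rw [Psi, List.length_take, min_eq_left hd]
  refine Finset.sum_congr rfl fun i hi => ?_
  have hi : i < d := Finset.mem_range.mp hi
  rw [List.take_take, min_eq_left hi.le]
  simp [List.getD, hi]

lemma Psi_sub_Psi_take (u : List ℕ) {d : ℕ} (hd : d ≤ u.length) :
    Psi N W u - Psi N W (u.take d) =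
      ∑ i ∈ Finset.Ico d u.length, W (u.take i) * (u.getD i 0 : ℝ) / ((N : ℝ) - 1) := by
  rw [Finset.sum_Ico_eq_sub _ hd, Psi_take u hd, Psi]

lemma Psi_sub_Psi_take_mem_Icc (hV : IsNaryTree N V) (hW : RadiallyDecaying V W ε)
    (hε₀ : 0 ≤ ε) (hε₁ : ε < 1) {u : List ℕ} (hu : u ∈ V) {d : ℕ} (hd : d ≤ u.length) :
    Psi N W u - Psi N W (u.take d) ∈ Icc 0 (W (u.take d) / (1 - ε)) := by
  rw [Psi_sub_Psi_take u hd]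
  have hWpos : ∀ i, 0 < W (u.take i) := fun i =>
    hW.weight_pos (hV.mem_of_prefix hu (List.take_prefix _ _))
  have hterm : ∀ i ∈ Finset.Ico d u.length,
      W (u.take i) * (u.getD i 0 : ℝ) / ((N : ℝ) - 1) ∈ Icc 0 (W (u.take i)) := by
    intro i hi
    have hi : i < u.length := (Finset.mem_Ico.mp hi).2
    have hdigit : (u.getD i 0 : ℝ) + 1 ≤ N := by
      rw [List.getD_eq_getElem u 0 hi]
      exact_mod_cast hV.lt_of_mem hu (List.getElem_mem hi)
    have hfrac : (u.getD i 0 : ℝ) / ((N : ℝ) - 1) ∈ Icc 0 1 :=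
      ⟨div_nonneg (Nat.cast_nonneg _) (by linarith),
        div_le_one_of_le₀ (by linarith) (by linarith)⟩
    rw [mul_div_assoc]
    exact ⟨mul_nonneg (hWpos i).le hfrac.1, mul_le_of_le_one_right (hWpos i).le hfrac.2⟩
  refine ⟨Finset.sum_nonneg fun i hi => (hterm i hi).1, ?_⟩
  calc _ ≤ ∑ i ∈ Finset.Ico d u.length, ε ^ (i - d) * W (u.take d) :=
        Finset.sum_le_sum fun i hi => (hterm i hi).2.trans <|
          hW.weight_take_le hV hε₀ hu (Finset.mem_Ico.mp hi).1 (Finset.mem_Ico.mp hi).2.le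
    _ = (∑ j ∈ Finset.Ico 0 (u.length - d), ε ^ j) * W (u.take d) := by
        rw [Finset.sum_Ico_eq_sum_range, ← Finset.range_eq_Ico, Finset.sum_mul]
        simp
    _ ≤ (ε ^ 0 / (1 - ε)) * W (u.take d) :=
        mul_le_mul_of_nonneg_right (geom_sum_Ico_le_of_lt_one hε₀ hε₁) (hWpos d).le
    _ = W (u.take d) / (1 - ε) := by ring

lemma Cluster_subset_Cluster {v w : List ℕ} (h : w <+: v) :
    Cluster N V W v ⊆ Cluster N V W w := by
  rintro x ⟨u, hu, hvu, rfl⟩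
  exact ⟨u, hu, h.trans hvu, rfl⟩

lemma mem_Cluster_coord_mem_Icc (hV : IsNaryTree N V) (hW : RadiallyDecaying V W ε)
    (hε₀ : 0 ≤ ε) (hε : ε ≤ 1 / 2) {v : List ℕ} {x : Pt} (hx : x ∈ Cluster N V W v) :
    x 0 ∈ Icc (Psi N W v) (Psi N W v + 2 * W v) ∧ x 1 ∈ Icc 0 (W v) := by
  obtain ⟨u, hu, hvu, rfl⟩ := hx
  have hd : v.length ≤ u.length := hvu.length_le
  rw [List.prefix_iff_eq_take.mp hvu]
  have hWv : 0 < W (u.take v.length) :=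
    hW.weight_pos (hV.mem_of_prefix hu.1 (List.take_prefix _ _))
  have hΨ := Psi_sub_Psi_take_mem_Icc hV hW hε₀ (by linarith) hu.1 hd
  have hgeom : W (u.take v.length) / (1 - ε) ≤ 2 * W (u.take v.length) := by
    rw [div_le_iff₀ (by linarith)]; nlinarith
  have hWu : W u ≤ ε ^ (u.length - v.length) * W (u.take v.length) := by
    simpa using hW.weight_take_le hV hε₀ hu.1 hd le_rfl
  have hpow : ε ^ (u.length - v.length) ≤ 1 := pow_le_one₀ hε₀ (by linarith)
  simp only [pt, PiLp.toLp_apply, Matrix.cons_val_zero, Matrix.cons_val_one]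
  exact ⟨⟨by linarith [hΨ.1], by linarith [hΨ.2]⟩, (hW.weight_pos hu.1).le,
    hWu.trans (mul_le_of_le_one_left hWv.le hpow)⟩

lemma dist_le_of_mem_Cluster (hV : IsNaryTree N V) (hW : RadiallyDecaying V W ε)
    (hε₀ : 0 ≤ ε) (hε : ε ≤ 1 / 2) {v : List ℕ} {x x' : Pt} (hx : x ∈ Cluster N V W v)
    (hx' : x' ∈ Cluster N V W v) : dist x x' ≤ 3 * W v := by
  obtain ⟨⟨hx₀, hx₀'⟩, hx₁, hx₁'⟩ := mem_Cluster_coord_mem_Icc hV hW hε₀ hε hx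
  obtain ⟨⟨hy₀, hy₀'⟩, hy₁, hy₁'⟩ := mem_Cluster_coord_mem_Icc hV hW hε₀ hε hx'
  calc dist x x' ≤ |x 0 - x' 0| + |x 1 - x' 1| := dist_le_abs_sub_add_abs_sub x x'
    _ ≤ 2 * W v + W v := by
        gcongr <;> exact abs_sub_le_iff.mpr ⟨by linarith, by linarith⟩
    _ = 3 * W v := by ring

end Tree

/-- property (B2) of the cluster balls: `κB_C ⊂ B_{π(C)}`. -/
theorem statement13 :
    ∃ K₁ : ℝ, 1 < K₁ ∧
      ∀ κ : ℝ, 4 ≤ κ →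
        ∃ k₀ : ℝ, 0 < k₀ ∧
          ∀ (N : ℕ) (V : Finset (List ℕ)) (W : List ℕ → ℝ) (ε : ℝ) (y : List ℕ → Pt),
            TreeHyp k₀ N V W ε → DepthAtLeastOne V →
            (∀ v ∈ V, y v ∈ Cluster N V W v) →
              (∀ v ∈ V, Cluster N V W v ⊆ closedBall (y v) (K₁ * W v)) ∧
              (∀ v ∈ V, v ≠ [] →
                closedBall (y v) (κ * (κ * K₁ * W v)) ⊆
                  closedBall (y v.dropLast) (κ * K₁ * W v.dropLast)) := by
  refine ⟨3, by norm_num, fun κ hκ => ⟨2 * (κ - 1) / κ ^ 2,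
    div_pos (by linarith) (by positivity), ?_⟩⟩
  rintro N V W ε y ⟨hN, hV, hε₀, hεk₀, hW⟩ - hy
  have hεκ : ε * κ ^ 2 ≤ κ - 1 := by
    have hN : (2 : ℝ) ≤ N := by exact_mod_cast hN
    have h2ε : ε * 2 ≤ 2 * (κ - 1) / κ ^ 2 :=
      (mul_le_mul_of_nonneg_left hN hε₀.le).trans ((le_div_iff₀ (by positivity)).mp hεk₀)
    rw [le_div_iff₀ (by positivity)] at h2ε
    linarith
  have hε : ε ≤ 1 / 2 := by nlinarith
  refine ⟨fun v hv x hx =>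
    mem_closedBall.mpr (dist_le_of_mem_Cluster hV hW hε₀.le hε hx (hy v hv)),
    fun v hv hv₀ => closedBall_subset_closedBall' ?_⟩
  have hπv : v.dropLast ∈ V := hV.mem_of_prefix hv (List.dropLast_prefix v)
  have hdist : dist (y v) (y v.dropLast) ≤ 3 * W v.dropLast :=
    dist_le_of_mem_Cluster hV hW hε₀.le hε
      (Cluster_subset_Cluster (List.dropLast_prefix v) (hy v hv)) (hy _ hπv)
  have hWv := hW.weight_le hv hv₀
  have hWπv := (hW.weight_pos hπv).le
  calc κ * (κ * 3 * W v) + dist (y v) (y v.dropLast)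
      = 3 * κ ^ 2 * W v + dist (y v) (y v.dropLast) := by ring
    _ ≤ 3 * κ ^ 2 * (ε * W v.dropLast) + 3 * W v.dropLast := by gcongr
    _ = 3 * (ε * κ ^ 2) * W v.dropLast + 3 * W v.dropLast := by ring
    _ ≤ 3 * (κ - 1) * W v.dropLast + 3 * W v.dropLast := by gcongr
    _ = κ * 3 * W v.dropLast := by ring
end

section
/- Let K₀ > 1 be any fixed constant. There is a constant κ₁ = κ₁(K₀) such that for every κ ≥ κ₁ there exist k₀ = k₀(κ,K₀) > 0 and an absolute constant k > 0 with the following property. Fix N ≥ 2, an N-ary tree V of depth L ≥ 1, and radially decaying weights with parameter ε ≤ k₀/N; fix points y_C ∈ C for each C ∈ 𝒞 and let B_C = B(y_C, κ·K₁·W_C), where K₁ > 1 is an absolute constant chosen so that C ⊂ κ^{−1}B_C for every C ∈ 𝒞. Then for any disjoint C, C' ∈ 𝒞₀, dist(K₀B_C, K₀B_{C'}) ≥ k·N^{−1}·(W_{π(C)} + W_{π(C')}). In particular, the balls {K₀B_C : C ∈ ∂𝒞} are pairwise disjoint, and for each fixed depth ℓ the balls {K₀B_C : C ∈ 𝒞,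 d(C) = ℓ} are pairwise disjoint. -/
open MeasureTheory Set Metric
open scoped Classical

/-!
Below a vertex `s`, each further digit moves `Ψ` by at most the current weight, and the weights
decay by the factor `ε ≤ 1/2`; so `Ψ` maps the subtree of `s` into `[Ψ(s), Ψ(s) + 2W_s]`, and the
cluster `C_s` has diameter at most `3W_s`. Two siblings `s a`, `s b` with `a < b` have `Ψ`-values
at least `W_s/(N−1)` apart, while their subtrees spread by at most `2εW_s ≤ W_s/(2N)`; hence
clusters below different children of `s` are `W_s/(2N)` apart horizontally. The dilated balls
around the clusters `C_v`, `C_{v'}` below them have radii `O(κK₀ W_v) = O(κK₀ ε W_s)`, which is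
negligible against `W_s/N` once `ε ≤ k₀/N` with `k₀ ≍ 1/(κK₀)`.
-/

theorem le_half_of_le_one_div_four_mul {ε : ℝ} {N : ℕ} (h : ε ≤ 1 / (4 * N)) : ε ≤ 1 / 2 := by
  rcases N.eq_zero_or_pos with rfl | hN
  · simpa using h.trans (by norm_num)
  · refine h.trans ?_
    rw [div_le_div_iff₀ (by positivity) (by norm_num)]
    have : (1 : ℝ) ≤ N := by exact_mod_cast hN
    linarith

theorem exists_eq_append_cons_of_not_prefix {α : Type*} :
    ∀ {v v' : List α}, ¬ v <+: v' → ¬ v' <+: v →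
      ∃ s a t b t', a ≠ b ∧ v = s ++ a :: t ∧ v' = s ++ b :: t'
  | [], _, h, _ => absurd List.nil_prefix h
  | _ :: _, [], _, h' => absurd List.nil_prefix h'
  | x :: xs, y :: ys, h, h' => by
    by_cases hxy : x = y
    · subst hxy
      obtain ⟨s, a, t, b, t', hab, rfl, rfl⟩ := exists_eq_append_cons_of_not_prefix
        (fun hp => h (List.cons_prefix_cons.mpr ⟨rfl, hp⟩))
        (fun hp => h' (List.cons_prefix_cons.mpr ⟨rfl, hp⟩))
      exact ⟨x :: s, a, t, b, t', hab, rfl, rfl⟩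
    · exact ⟨[], x, xs, y, ys, hxy, rfl, rfl⟩

theorem exists_isLeaf_prefix {V : Finset (List ℕ)} {v : List ℕ} (hv : v ∈ V) :
    ∃ u, IsLeaf V u ∧ v <+: u := by
  obtain ⟨u, hu, hmax⟩ :=
    Finset.exists_max_image (V.filter (v <+: ·)) List.length ⟨v, by simp [hv]⟩
  rw [Finset.mem_filter] at hu
  refine ⟨u, ⟨hu.1, fun a ha => ?_⟩, hu.2⟩
  have := hmax (u ++ [a]) (Finset.mem_filter.mpr ⟨ha, hu.2.trans (List.prefix_append u [a])⟩)
  simp at this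

theorem IsLeaf.eq_of_prefix {V : Finset (List ℕ)} {v u : List ℕ}
    (hV : ∀ w ∈ V, ∀ w', w' <+: w → w' ∈ V) (hv : IsLeaf V v) (hu : u ∈ V) (h : v <+: u) :
    u = v := by
  obtain ⟨_ | ⟨c, t⟩, rfl⟩ := h
  · simp
  · exact absurd (hV _ hu _ ⟨t, by simp⟩) (hv.2 c)

theorem not_prefix_of_disjoint_Cluster {N : ℕ} {V : Finset (List ℕ)} {W : List ℕ → ℝ}
    {v v' : List ℕ} (hv : v ∈ V) (h : Disjoint (Cluster N V W v) (Cluster N V W v')) :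
    ¬ v' <+: v := by
  intro hv'v
  obtain ⟨u, hu, hvu⟩ := exists_isLeaf_prefix hv
  exact disjoint_left.mp h ⟨u, hu, hvu, rfl⟩ ⟨u, hu, hv'v.trans hvu, rfl⟩

theorem Psi_append_singleton (N : ℕ) (W : List ℕ → ℝ) (s : List ℕ) (a : ℕ) :
    Psi N W (s ++ [a]) = Psi N W s + W s * a / ((N : ℝ) - 1) := by
  unfold Psi
  rw [List.length_append, List.length_singleton, Finset.sum_range_succ]
  congr 1
  · refine Finset.sum_congr rfl fun i hi => ?_
    have hi : i < s.length := Finset.mem_range.mp hi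
    rw [List.take_append_of_le_length hi.le, List.getD_append _ _ _ _ hi]
  · simp

theorem Psi_append_singleton_mem_Icc {N : ℕ} {W : List ℕ → ℝ} {s : List ℕ} {a : ℕ}
    (hW : 0 ≤ W s) (ha : a < N) :
    Psi N W (s ++ [a]) ∈ Icc (Psi N W s) (Psi N W s + W s) := by
  have ha' : (a : ℝ) ≤ (N : ℝ) - 1 := by
    rw [le_sub_iff_add_le]; exact_mod_cast ha
  have hN : (0 : ℝ) ≤ (N : ℝ) - 1 := (Nat.cast_nonneg a).trans ha'
  rw [Psi_append_singleton, mul_div_assoc]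
  exact ⟨le_add_of_nonneg_right (mul_nonneg hW (by positivity)),
    add_le_add_right (mul_le_of_le_one_right hW (div_le_one_of_le₀ ha' hN)) _⟩

/-- The part of `TreeHyp` that the geometry of the clusters depends on. -/
structure DecayingTree (N : ℕ) (V : Finset (List ℕ)) (W : List ℕ → ℝ) (ε : ℝ) : Prop where
  prefix_mem : ∀ v ∈ V, ∀ u, u <+: v → u ∈ V
  digit_lt : ∀ v ∈ V, ∀ i ∈ v, i < N
  weight_pos : ∀ v ∈ V, 0 < W v
  weight_le : ∀ v ∈ V, v ≠ [] → W v ≤ ε * W v.dropLast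

theorem TreeHyp.decayingTree {k₀ : ℝ} {N : ℕ} {V : Finset (List ℕ)} {W : List ℕ → ℝ} {ε : ℝ}
    (h : TreeHyp k₀ N V W ε) : DecayingTree N V W ε :=
  let ⟨_, ⟨_, hpre, hdig, _⟩, _, _, _, hpos, hdec⟩ := h
  ⟨hpre, hdig, hpos, hdec⟩

namespace DecayingTree

variable {N : ℕ} {V : Finset (List ℕ)} {W : List ℕ → ℝ} {ε : ℝ}

theorem weight_append_singleton_le (hT : DecayingTree N V W ε) {s : List ℕ} {a : ℕ}
    (h : s ++ [a] ∈ V) : W (s ++ [a]) ≤ ε * W s := by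
  simpa using hT.weight_le _ h (by simp)

theorem weight_le_of_prefix (hT : DecayingTree N V W ε) (hε : ε ≤ 1) {s v : List ℕ}
    (hv : v ∈ V) (h : s <+: v) : W v ≤ W s := by
  obtain ⟨t, rfl⟩ := h
  induction t generalizing s with
  | nil => simp
  | cons a t ih =>
    have hsa : s ++ [a] ∈ V := hT.prefix_mem _ hv _ ⟨t, by simp⟩
    calc W (s ++ a :: t) = W (s ++ [a] ++ t) := by simp
      _ ≤ W (s ++ [a]) := ih (by simpa using hv)
      _ ≤ ε * W s := hT.weight_append_singleton_le hsa
      _ ≤ W s := mul_le_of_le_one_left (hT.weight_pos _ (hT.prefix_mem _ hsa _ (by simp))).le hε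

theorem Psi_mem_Icc_of_prefix (hT : DecayingTree N V W ε) (hε : ε ≤ 1 / 2) {s v : List ℕ}
    (hv : v ∈ V) (h : s <+: v) : Psi N W v ∈ Icc (Psi N W s) (Psi N W s + 2 * W s) := by
  obtain ⟨t, rfl⟩ := h
  induction t generalizing s with
  | nil => simpa using (hT.weight_pos _ (by simpa using hv)).le
  | cons a t ih =>
    have hsa : s ++ [a] ∈ V := hT.prefix_mem _ hv _ ⟨t, by simp⟩
    have hs : s ∈ V := hT.prefix_mem _ hsa _ (by simp)
    have hWs := hT.weight_pos _ hs
    have hchild := Psi_append_singleton_mem_Icc (N := N) (W := W) hWs.le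
      (hT.digit_lt _ hsa a (by simp))
    have htail := ih (s := s ++ [a]) (by simpa using hv)
    rw [List.append_assoc, List.singleton_append] at htail
    have hWsa : W (s ++ [a]) ≤ W s / 2 := (hT.weight_append_singleton_le hsa).trans
      (by linarith [mul_le_mul_of_nonneg_right hε hWs.le])
    exact ⟨by linarith [htail.1, hchild.1], by linarith [htail.2, hchild.2]⟩

theorem Psi_sub_ge_of_lt (hT : DecayingTree N V W ε) (hε : ε ≤ 1 / (4 * N)) {s u u' : List ℕ}
    {a b : ℕ} (hab : a < b) (hu : u ∈ V) (hau : s ++ [a] <+: u) (hu' : u' ∈ V)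
    (hbu' : s ++ [b] <+: u') :
    W s / (2 * N) ≤ Psi N W u' - Psi N W u := by
  have hsa : s ++ [a] ∈ V := hT.prefix_mem _ hu _ hau
  have hsb : s ++ [b] ∈ V := hT.prefix_mem _ hu' _ hbu'
  have hWs : 0 < W s := hT.weight_pos _ (hT.prefix_mem _ hsa _ (by simp))
  have hN : (b : ℝ) + 1 ≤ N := by exact_mod_cast hT.digit_lt _ hsb b (by simp)
  have hba : (a : ℝ) + 1 ≤ b := by exact_mod_cast hab
  have hε2 := le_half_of_le_one_div_four_mul hε
  have hu_le := (hT.Psi_mem_Icc_of_prefix hε2 hu hau).2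
  have hu'_ge := (hT.Psi_mem_Icc_of_prefix hε2 hu' hbu').1
  have hWsa := hT.weight_append_singleton_le hsa
  rw [Psi_append_singleton] at hu_le hu'_ge
  have hgap : W s / N ≤ W s * b / ((N : ℝ) - 1) - W s * a / ((N : ℝ) - 1) := by
    rw [← sub_div, ← mul_sub, div_le_div_iff₀ (by linarith) (by linarith)]
    nlinarith [mul_le_mul_of_nonneg_left (le_sub_iff_add_le'.mpr hba)
      (mul_nonneg hWs.le (Nat.cast_nonneg N))]
  have hspread : 2 * (ε * W s) ≤ W s / (2 * N) := calc
    2 * (ε * W s) ≤ 2 * (1 / (4 * N) * W s) := by gcongr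
    _ = W s / (2 * N) := by ring
  have : W s / N - W s / (2 * N) = W s / (2 * N) := by ring
  linarith

end DecayingTree

theorem dist_pt (a b c d : ℝ) :
    dist (pt a b) (pt c d) = √((a - c) ^ 2 + (b - d) ^ 2) := by
  simp [EuclideanSpace.dist_eq, pt, Fin.sum_univ_two, Real.dist_eq, sq_abs]

theorem abs_sub_le_dist_pt (a b c d : ℝ) : |a - c| ≤ dist (pt a b) (pt c d) := by
  rw [dist_pt, ← Real.sqrt_sq_eq_abs]
  exact Real.sqrt_le_sqrt (by nlinarith)

theorem dist_pt_le (a b c d : ℝ) : dist (pt a b) (pt c d) ≤ |a - c| + |b - d| := by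
  rw [dist_pt, Real.sqrt_le_left (by positivity)]
  nlinarith [sq_abs (a - c), sq_abs (b - d), abs_nonneg (a - c), abs_nonneg (b - d)]

namespace DecayingTree

variable {N : ℕ} {V : Finset (List ℕ)} {W : List ℕ → ℝ} {ε : ℝ}

theorem dist_le_of_mem_Cluster (hT : DecayingTree N V W ε) (hε : ε ≤ 1 / 2) {v : List ℕ}
    {x x' : Pt} (hx : x ∈ Cluster N V W v) (hx' : x' ∈ Cluster N V W v) :
    dist x x' ≤ 3 * W v := by
  obtain ⟨u, hu, hvu, rfl⟩ := hx
  obtain ⟨u', hu', hvu', rfl⟩ := hx'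
  have hΨ := hT.Psi_mem_Icc_of_prefix hε hu.1 hvu
  have hΨ' := hT.Psi_mem_Icc_of_prefix hε hu'.1 hvu'
  have hW := hT.weight_le_of_prefix (by linarith) hu.1 hvu
  have hW' := hT.weight_le_of_prefix (by linarith) hu'.1 hvu'
  have := hT.weight_pos _ hu.1
  have := hT.weight_pos _ hu'.1
  rw [mem_Icc] at hΨ hΨ'
  have hdx : |Psi N W u - Psi N W u'| ≤ 2 * W v := abs_sub_le_iff.mpr ⟨by linarith, by linarith⟩
  have hdy : |W u - W u'| ≤ W v := abs_sub_le_iff.mpr ⟨by linarith, by linarith⟩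
  linarith [dist_pt_le (Psi N W u) (W u) (Psi N W u') (W u')]

theorem le_dist_of_mem_Cluster (hT : DecayingTree N V W ε) (hε : ε ≤ 1 / (4 * N))
    {s t t' : List ℕ} {a b : ℕ} (hab : a ≠ b) {x x' : Pt}
    (hx : x ∈ Cluster N V W (s ++ a :: t)) (hx' : x' ∈ Cluster N V W (s ++ b :: t')) :
    W s / (2 * N) ≤ dist x x' := by
  wlog hlt : a < b generalizing a b t t' x x'
  · rw [dist_comm]
    exact this hab.symm hx' hx (lt_of_le_of_ne (not_lt.mp hlt) hab.symm)
  obtain ⟨u, hu, hvu, rfl⟩ := hx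
  obtain ⟨u', hu', hvu', rfl⟩ := hx'
  have hsep := hT.Psi_sub_ge_of_lt (s := s) hε hlt hu.1 (.trans ⟨t, by simp⟩ hvu) hu'.1
    (.trans ⟨t', by simp⟩ hvu')
  calc W s / (2 * N) ≤ |Psi N W u - Psi N W u'| := by
        rw [abs_sub_comm]; exact hsep.trans (le_abs_self _)
    _ ≤ _ := abs_sub_le_dist_pt _ _ _ _

/-- With `s` the lowest common ancestor of `v` and `v'`, the clusters are `W_s/(2N)` apart and
each ball has radius at most `ρεW_s ≤ W_s/(8N)`. -/
theorem le_dist_of_not_prefix (hT : DecayingTree N V W ε) (hε : ε ≤ 1 / (4 * N)) {ρ : ℝ}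
    (hρ : 0 ≤ ρ) (hρε : ρ * ε ≤ 1 / (8 * N)) {v v' : List ℕ} (hv : v ∈ V) (hv' : v' ∈ V)
    (hvv' : ¬ v <+: v') (hv'v : ¬ v' <+: v) {y y' x x' : Pt} (hy : y ∈ Cluster N V W v)
    (hy' : y' ∈ Cluster N V W v') (hx : x ∈ closedBall y (ρ * W v))
    (hx' : x' ∈ closedBall y' (ρ * W v')) :
    1 / 8 * (N : ℝ)⁻¹ * (W v.dropLast + W v'.dropLast) ≤ dist x x' := by
  obtain ⟨s, a, t, b, t', hab, rfl, rfl⟩ := exists_eq_append_cons_of_not_prefix hvv' hv'v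
  have hε1 : ε ≤ 1 := (le_half_of_le_one_div_four_mul hε).trans (by norm_num)
  have hWs : 0 < W s := hT.weight_pos _ (hT.prefix_mem _ hv _ (List.prefix_append _ _))
  have hchild : ∀ {c : ℕ} {r : List ℕ}, s ++ c :: r ∈ V →
      ρ * W (s ++ c :: r) ≤ W s / (8 * N) ∧ W (s ++ c :: r).dropLast ≤ W s := fun {c r} h => by
    have hsc : s ++ [c] <+: s ++ c :: r := ⟨r, by simp⟩
    have hpar : s <+: (s ++ c :: r).dropLast := by
      rw [List.dropLast_append_of_ne_nil (List.cons_ne_nil c r)]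
      exact List.prefix_append _ _
    have hW : W (s ++ c :: r) ≤ ε * W s := (hT.weight_le_of_prefix hε1 h hsc).trans
      (hT.weight_append_singleton_le (hT.prefix_mem _ h _ hsc))
    refine ⟨?_, hT.weight_le_of_prefix hε1 (hT.prefix_mem _ h _ (List.dropLast_prefix _)) hpar⟩
    calc ρ * W (s ++ c :: r) ≤ ρ * ε * W s := by rw [mul_assoc]; gcongr
      _ ≤ 1 / (8 * N) * W s := by gcongr
      _ = W s / (8 * N) := by ring
  obtain ⟨hrv, hWpv⟩ := hchild hv
  obtain ⟨hrv', hWpv'⟩ := hchild hv'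
  have hyy' := hT.le_dist_of_mem_Cluster hε hab hy hy'
  have htri : dist y y' ≤ ρ * W (s ++ a :: t) + dist x x' + ρ * W (s ++ b :: t') := by
    have := dist_triangle4 y x x' y'
    rw [dist_comm y x] at this
    linarith [mem_closedBall.mp hx, mem_closedBall.mp hx']
  calc 1 / 8 * (N : ℝ)⁻¹ * (W (s ++ a :: t).dropLast + W (s ++ b :: t').dropLast)
      ≤ 1 / 8 * (N : ℝ)⁻¹ * (2 * W s) := by gcongr; linarith
    _ = W s / (2 * N) - 2 * (W s / (8 * N)) := by ring
    _ ≤ dist x x' := by linarith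

theorem disjoint_closedBall_of_not_prefix (hT : DecayingTree N V W ε) (hε : ε ≤ 1 / (4 * N))
    {ρ : ℝ} (hρ : 0 ≤ ρ) (hρε : ρ * ε ≤ 1 / (8 * N)) {v v' : List ℕ} (hv : v ∈ V)
    (hv' : v' ∈ V) (hvv' : ¬ v <+: v') (hv'v : ¬ v' <+: v) {y y' : Pt}
    (hy : y ∈ Cluster N V W v) (hy' : y' ∈ Cluster N V W v') :
    Disjoint (closedBall y (ρ * W v)) (closedBall y' (ρ * W v')) := by
  refine disjoint_left.mpr fun x hx hx' => ?_
  have hle := hT.le_dist_of_not_prefix hε hρ hρε hv hv' hvv' hv'v hy hy' hx hx'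
  obtain ⟨i, hi⟩ := List.exists_mem_of_ne_nil v (by rintro rfl; exact hvv' List.nil_prefix)
  have hN : (0 : ℝ) < N := by exact_mod_cast (Nat.zero_le i).trans_lt (hT.digit_lt v hv i hi)
  have := hT.weight_pos _ (hT.prefix_mem _ hv _ (List.dropLast_prefix v))
  have := hT.weight_pos _ (hT.prefix_mem _ hv' _ (List.dropLast_prefix v'))
  rw [dist_self] at hle
  exact hle.not_gt (by positivity)

end DecayingTree

theorem le_setDist {s t : Set Pt} {c : ℝ} (hs : s.Nonempty) (ht : t.Nonempty)
    (h : ∀ x ∈ s, ∀ y ∈ t, c ≤ dist x y) : c ≤ setDist s t :=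
  le_csInf ⟨_, _, hs.some_mem, _, ht.some_mem, rfl⟩ fun _ ⟨x, hx, y, hy, hd⟩ => hd ▸ h x hx y hy

/-- properties (B4), (B5), (B6) of the cluster balls. -/
theorem statement14 :
    ∃ K₁ k : ℝ, 1 < K₁ ∧ 0 < k ∧
      ∀ K₀ : ℝ, 1 < K₀ →
        ∃ κ₁ : ℝ, ∀ κ : ℝ, κ₁ ≤ κ →
          ∃ k₀ : ℝ, 0 < k₀ ∧
            ∀ (N : ℕ) (V : Finset (List ℕ)) (W : List ℕ → ℝ) (ε : ℝ) (y : List ℕ → Pt),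
              TreeHyp k₀ N V W ε → DepthAtLeastOne V →
              (∀ v ∈ V, y v ∈ Cluster N V W v) →
                (∀ v ∈ V, Cluster N V W v ⊆ closedBall (y v) (K₁ * W v)) ∧
                (∀ v ∈ V, v ≠ [] → ∀ v' ∈ V, v' ≠ [] →
                  Disjoint (Cluster N V W v) (Cluster N V W v') →
                    k * (N : ℝ)⁻¹ * (W v.dropLast + W v'.dropLast) ≤
                      setDist (closedBall (y v) (K₀ * (κ * K₁ * W v)))
                        (closedBall (y v') (K₀ * (κ * K₁ * W v')))) ∧
                (∀ v v' : List ℕ, IsLeaf V v → IsLeaf V v' →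
                  Cluster N V W v ≠ Cluster N V W v' →
                    Disjoint (closedBall (y v) (K₀ * (κ * K₁ * W v)))
                      (closedBall (y v') (K₀ * (κ * K₁ * W v')))) ∧
                (∀ v ∈ V, ∀ v' ∈ V, v.length = v'.length →
                  Cluster N V W v ≠ Cluster N V W v' →
                    Disjoint (closedBall (y v) (K₀ * (κ * K₁ * W v)))
                      (closedBall (y v') (K₀ * (κ * K₁ * W v')))) := by
  refine ⟨3, 1 / 8, by norm_num, by norm_num, fun K₀ hK₀ => ⟨1, fun κ hκ => ?_⟩⟩
  have hK₀κ : 1 < K₀ * κ := by nlinarith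
  refine ⟨1 / (24 * (K₀ * κ)), by positivity, ?_⟩
  intro N V W ε y hTree _ hy
  have hT := hTree.decayingTree
  obtain ⟨-, -, -, hεk₀, -⟩ := hTree
  have hε : ε ≤ 1 / (4 * N) := calc
    ε ≤ 1 / (24 * (K₀ * κ)) / N := hεk₀
    _ ≤ 1 / 4 / N := by gcongr; linarith
    _ = 1 / (4 * N) := by ring
  have hρε : K₀ * κ * 3 * ε ≤ 1 / (8 * N) := calc
    K₀ * κ * 3 * ε ≤ K₀ * κ * 3 * (1 / (24 * (K₀ * κ)) / N) := by gcongr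
    _ = 1 / (8 * N) := by field_simp; ring
  have hρ : ∀ w, K₀ * (κ * 3 * w) = K₀ * κ * 3 * w := fun w => by ring
  simp only [hρ]
  have hdisj : ∀ v ∈ V, ∀ v' ∈ V, ¬ v <+: v' → ¬ v' <+: v →
      Disjoint (closedBall (y v) (K₀ * κ * 3 * W v)) (closedBall (y v') (K₀ * κ * 3 * W v')) :=
    fun v hv v' hv' hvv' hv'v => hT.disjoint_closedBall_of_not_prefix hε (by positivity) hρε
      hv hv' hvv' hv'v (hy v hv) (hy v' hv')
  refine ⟨fun v hv x hx => ?_, fun v hv _ v' hv' _ hCC' => ?_,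
    fun v v' hl hl' hCC' => ?_, fun v hv v' hv' hlen hCC' => ?_⟩
  · exact mem_closedBall.mpr
      (hT.dist_le_of_mem_Cluster (le_half_of_le_one_div_four_mul hε) hx (hy v hv))
  · exact le_setDist (nonempty_closedBall.mpr (by positivity [hT.weight_pos v hv]))
      (nonempty_closedBall.mpr (by positivity [hT.weight_pos v' hv']))
      fun x hx x' hx' => hT.le_dist_of_not_prefix hε (by positivity) hρε hv hv'
        (not_prefix_of_disjoint_Cluster hv' hCC'.symm) (not_prefix_of_disjoint_Cluster hv hCC')
        (hy v hv) (hy v' hv') hx hx'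
  · have hvv' : v ≠ v' := by rintro rfl; exact hCC' rfl
    exact hdisj v hl.1 v' hl'.1 (fun h => hvv' (hl.eq_of_prefix hT.prefix_mem hl'.1 h).symm)
      (fun h => hvv' (hl'.eq_of_prefix hT.prefix_mem hl.1 h))
  · have hvv' : v ≠ v' := by rintro rfl; exact hCC' rfl
    exact hdisj v hv v' hv' (fun h => hvv' (h.eq_of_length hlen))
      (fun h => hvv' (h.eq_of_length hlen.symm).symm)
end
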